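/- Let ν > −1 and let j_{ν,1} be the first positive zero of the Bessel function J_ν. For p ≤ (ν+1)/(ν+2) and all x in (0, j_{ν,1}), (1−p)/𝒥_{ν+1}(x) + p·𝒥_ν(x)/𝒥_{ν+1}(x) > 1. -/

import Mathlib

/-- The normalized Bessel function of the first kind,
`𝒥_ν(x) = 2^ν Γ(ν+1) x^{-ν} J_ν(x) = ∑ (-1/4)^n x^(2n) / ((ν+1)_n n!)`. -/
noncomputable def besselJn (ν x : ℝ) : ℝ :=
  ∑' n : ℕ, ((-1 / 4 : ℝ) ^ n * x ^ (2 * n)) * Real.Gamma (ν + 1) /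
    (Real.Gamma (ν + n + 1) * n.factorial)

/-!
Differentiating the power series gives `𝒥_ν' = -x/(2(ν+1)) 𝒥_{ν+1}`, and comparing coefficients
gives `𝒥_ν - 𝒥_{ν+1} = -x²/(4(ν+1)(ν+2)) 𝒥_{ν+2}`. Together they say
`x 𝒥_{ν+1}' = 2(ν+1)(𝒥_ν - 𝒥_{ν+1})`: at a zero of `𝒥_{ν+1}` where `𝒥_ν > 0` the slope is
positive, which a first zero reached from above cannot have. Hence, starting from `𝒥_ν`, every
`𝒥_{ν+k}` is positive on `(0, j_{ν,1})`. Then `F = (ν+1)𝒥_ν - (ν+2)𝒥_{ν+1}` has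
`F' = x³/(8(ν+2)(ν+3)) 𝒥_{ν+3} > 0` and `F(0) = -1`, so `(ν+2)𝒥_{ν+1} < 1 + (ν+1)𝒥_ν`, while
`𝒥_ν < 1` because `𝒥_ν` decreases. For `p ≤ (ν+1)/(ν+2)` this gives
`(1-p) + p𝒥_ν ≥ (1 + (ν+1)𝒥_ν)/(ν+2) > 𝒥_{ν+1}`.
-/

open Set Filter

theorem pos_of_deriv_pos_of_eq_zero {f : ℝ → ℝ} {a b : ℝ} (hf : ContinuousOn f (Ico a b))
    (ha : 0 < f a) (hderiv : ∀ t ∈ Ioo a b, f t = 0 → 0 < deriv f t) :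
    ∀ t ∈ Ioo a b, 0 < f t := by
  intro t ht
  by_contra! hft
  have hft' : ContinuousOn f (Icc a t) := hf.mono (Icc_subset_Ico_right ht.2)
  have hZ : IsCompact (Icc a t ∩ f ⁻¹' Iic 0) := isCompact_Icc.of_isClosed_subset
    (hft'.preimage_isClosed_of_isClosed isClosed_Icc isClosed_Iic) inter_subset_left
  obtain ⟨s, ⟨⟨has, hst⟩, hfs⟩, hleast⟩ := hZ.exists_isLeast ⟨t, ⟨ht.1.le, le_rfl⟩, hft⟩
  have hpos : ∀ u ∈ Ico a s, 0 < f u := fun u hu => by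
    by_contra! h
    exact hu.2.not_ge (hleast ⟨⟨hu.1, hu.2.le.trans hst⟩, h⟩)
  have has' : a < s := has.lt_of_ne (by rintro rfl; exact (ha.trans_le hfs).false)
  have hs0 : f s = 0 := by
    obtain ⟨u, hu, hfu⟩ := intermediate_value_Icc' has (hft'.mono (Icc_subset_Icc_right hst))
      ⟨hfs, ha.le⟩
    rwa [← le_antisymm hu.2 (hleast ⟨⟨hu.1, hu.2.trans hst⟩, hfu.le⟩)]
  -- a zero with positive derivative is entered from below, contradicting `f > 0` on `[a, s)`
  have hsign := eventually_nhdsWithin_sign_eq_of_deriv_pos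
    (hderiv s ⟨has', hst.trans_lt ht.2⟩ hs0) hs0
  obtain ⟨u, hu, hus⟩ :=
    ((eventually_nhdsWithin_of_eventually_nhds hsign).and (Ioo_mem_nhdsLT has')).exists
  rw [sign_pos (hpos u ⟨hus.1.le, hus.2⟩), sign_neg (sub_neg.2 hus.2)] at hu
  exact absurd hu (by decide)

section Bessel

variable {ν : ℝ}

noncomputable def besselJnCoeff (ν : ℝ) (n : ℕ) : ℝ :=
  (-1 / 4 : ℝ) ^ n * Real.Gamma (ν + 1) / (Real.Gamma (ν + n + 1) * n.factorial)

lemma besselJn_eq_tsum (ν x : ℝ) :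
    besselJn ν x = ∑' n : ℕ, besselJnCoeff ν n * x ^ (2 * n) :=
  tsum_congr fun n => by rw [besselJnCoeff]; ring

lemma besselJnCoeff_zero (hν : -1 < ν) : besselJnCoeff ν 0 = 1 := by
  have hΓ : Real.Gamma (ν + 1) ≠ 0 := (Real.Gamma_pos_of_pos (by linarith)).ne'
  simp [besselJnCoeff, hΓ]

lemma besselJnCoeff_succ (hν : -1 < ν) (n : ℕ) :
    besselJnCoeff ν (n + 1) = -besselJnCoeff ν n / (4 * (ν + n + 1) * (n + 1)) := by
  have hνn : ν + n + 1 ≠ 0 := by have := n.cast_nonneg (α := ℝ); intro h; linarith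
  have hΓsucc : Real.Gamma (ν + (n + 1 : ℕ) + 1) = (ν + n + 1) * Real.Gamma (ν + n + 1) := by
    rw [← Real.Gamma_add_one hνn]; push_cast; ring_nf
  rw [besselJnCoeff, besselJnCoeff, hΓsucc, Nat.factorial_succ]
  push_cast
  field_simp
  ring

lemma besselJnCoeff_add_one (hν : -1 < ν) (n : ℕ) :
    besselJnCoeff (ν + 1) n = (ν + 1) * besselJnCoeff ν n / (ν + n + 1) := by
  have hνn : ν + n + 1 ≠ 0 := by have := n.cast_nonneg (α := ℝ); intro h; linarith
  have hν1 : ν + 1 ≠ 0 := by linarith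
  rw [besselJnCoeff, besselJnCoeff, show ν + 1 + n + 1 = ν + n + 1 + 1 by ring,
    Real.Gamma_add_one hνn, Real.Gamma_add_one hν1]
  field_simp

lemma summable_besselJnCoeff_majorant (hν : -1 < ν) {R : ℝ} (hR : 0 ≤ R) :
    Summable fun n : ℕ => |besselJnCoeff ν n| * (2 * n + 1) * R ^ (2 * n) := by
  refine summable_of_ratio_norm_eventually_le (r := 1 / 2) (by norm_num) ?_
  filter_upwards [eventually_ge_atTop (⌈R ^ 2⌉₊ + 1)] with n hn
  have hRn : R ^ 2 ≤ n := (Nat.le_ceil _).trans (by exact_mod_cast (Nat.le_succ _).trans hn)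
  have hn1 : (1 : ℝ) ≤ n := by exact_mod_cast (Nat.le_add_left 1 _).trans hn
  have hνn : (n : ℝ) < ν + n + 1 := by linarith
  have hq : 0 < 4 * (ν + n + 1) * (n + 1) := by nlinarith
  rw [Real.norm_of_nonneg (by positivity), Real.norm_of_nonneg (by positivity),
    besselJnCoeff_succ hν, abs_div, abs_neg, abs_of_pos hq,
    show 2 * (n + 1) = 2 * n + 2 by ring, pow_add]
  push_cast
  rw [div_mul_eq_mul_div, div_mul_eq_mul_div, div_le_iff₀ hq]
  have hc := abs_nonneg (besselJnCoeff ν n)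
  have hp := pow_nonneg hR (2 * n)
  have key : (2 * (n + 1) + 1) * R ^ 2 ≤ (2 * n + 1) * (2 * (ν + n + 1) * (n + 1)) := by
    nlinarith [mul_le_mul_of_nonneg_left hRn (by positivity : (0 : ℝ) ≤ 2 * (n + 1) + 1),
      mul_le_mul_of_nonneg_left hνn.le (by positivity : (0 : ℝ) ≤ (2 * n + 1) * (n + 1))]
  nlinarith [mul_le_mul_of_nonneg_left key (mul_nonneg hc hp)]

lemma norm_besselJnCoeff_mul_pow_le (ν : ℝ) {x R : ℝ} (hxR : |x| ≤ R) (n : ℕ) :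
    ‖besselJnCoeff ν n * x ^ (2 * n)‖ ≤ |besselJnCoeff ν n| * (2 * n + 1) * R ^ (2 * n) := by
  rw [norm_mul, Real.norm_eq_abs, norm_pow, Real.norm_eq_abs, mul_assoc]
  gcongr
  calc |x| ^ (2 * n) ≤ R ^ (2 * n) := by gcongr
    _ ≤ (2 * n + 1) * R ^ (2 * n) :=
      le_mul_of_one_le_left (pow_nonneg ((abs_nonneg x).trans hxR) _)
        (by linarith [n.cast_nonneg (α := ℝ)])

lemma norm_besselJnCoeff_mul_deriv_pow_le (ν : ℝ) {y R : ℝ} (hR : 1 ≤ R) (hyR : |y| ≤ R) (n : ℕ) :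
    ‖besselJnCoeff ν n * ((2 * n : ℕ) * y ^ (2 * n - 1))‖ ≤
      |besselJnCoeff ν n| * (2 * n + 1) * R ^ (2 * n) := by
  rw [norm_mul, Real.norm_eq_abs, norm_mul, norm_pow, Real.norm_eq_abs, Real.norm_eq_abs,
    Nat.abs_cast, mul_assoc]
  push_cast
  gcongr
  · linarith
  · calc |y| ^ (2 * n - 1) ≤ R ^ (2 * n - 1) := by gcongr
      _ ≤ R ^ (2 * n) := pow_le_pow_right₀ hR (Nat.sub_le _ _)

lemma summable_besselJnCoeff_mul_pow (hν : -1 < ν) (x : ℝ) :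
    Summable fun n : ℕ => besselJnCoeff ν n * x ^ (2 * n) :=
  (summable_besselJnCoeff_majorant hν (abs_nonneg x)).of_norm_bounded
    (norm_besselJnCoeff_mul_pow_le ν le_rfl)

lemma besselJn_zero (hν : -1 < ν) : besselJn ν 0 = 1 := by
  rw [besselJn_eq_tsum, tsum_eq_single 0 fun n hn => by simp [hn], besselJnCoeff_zero hν]
  simp

lemma hasDerivAt_besselJn (hν : -1 < ν) (x : ℝ) :
    HasDerivAt (besselJn ν) (-(x / (2 * (ν + 1))) * besselJn (ν + 1) x) x := by
  set R := |x| + 1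
  have hR : 1 ≤ R := le_add_of_nonneg_left (abs_nonneg x)
  have hxR : |x| ≤ R := by linarith
  have hball : ∀ y ∈ Metric.ball (0 : ℝ) R, |y| ≤ R := fun y hy => by
    rw [mem_ball_zero_iff, Real.norm_eq_abs] at hy; exact hy.le
  have hderiv := hasDerivAt_tsum_of_isPreconnected
    (summable_besselJnCoeff_majorant hν (by linarith)) Metric.isOpen_ball
    (convex_ball (0 : ℝ) R).isPreconnected
    (fun n y _ => (hasDerivAt_pow (2 * n) y).const_mul (besselJnCoeff ν n))
    (fun n y hy => norm_besselJnCoeff_mul_deriv_pow_le ν hR (hball y hy) n)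
    (Metric.mem_ball_self (by linarith)) (summable_besselJnCoeff_mul_pow hν 0)
    (by rw [mem_ball_zero_iff, Real.norm_eq_abs]; linarith : x ∈ Metric.ball (0 : ℝ) R)
  have hsum : Summable fun n : ℕ => besselJnCoeff ν n * ((2 * n : ℕ) * x ^ (2 * n - 1)) :=
    (summable_besselJnCoeff_majorant hν (by linarith)).of_norm_bounded
      (norm_besselJnCoeff_mul_deriv_pow_le ν hR hxR)
  have hterm : ∀ n : ℕ, besselJnCoeff ν (n + 1) * ((2 * (n + 1) : ℕ) * x ^ (2 * (n + 1) - 1)) =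
      -(x / (2 * (ν + 1))) * (besselJnCoeff (ν + 1) n * x ^ (2 * n)) := fun n => by
    have hνn : ν + n + 1 ≠ 0 := by have := n.cast_nonneg (α := ℝ); intro h; linarith
    have hν1 : ν + 1 ≠ 0 := by linarith
    rw [besselJnCoeff_succ hν, besselJnCoeff_add_one hν, show 2 * (n + 1) - 1 = 2 * n + 1 by omega,
      pow_succ]
    push_cast
    field_simp
    ring
  rw [show besselJn ν = fun y => ∑' n : ℕ, besselJnCoeff ν n * y ^ (2 * n) from
    funext (besselJn_eq_tsum ν)]
  refine hderiv.congr_deriv ?_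
  rw [hsum.tsum_eq_zero_add, tsum_congr hterm, tsum_mul_left, besselJn_eq_tsum]
  simp

lemma continuous_besselJn (hν : -1 < ν) : Continuous (besselJn ν) :=
  continuous_iff_continuousAt.2 fun x => (hasDerivAt_besselJn hν x).continuousAt

lemma besselJn_sub_besselJn_add_one (hν : -1 < ν) (x : ℝ) :
    besselJn ν x - besselJn (ν + 1) x =
      -(x ^ 2 / (4 * (ν + 1) * (ν + 2))) * besselJn (ν + 2) x := by
  have hν1 : -1 < ν + 1 := by linarith
  have hsum := (summable_besselJnCoeff_mul_pow hν x).sub (summable_besselJnCoeff_mul_pow hν1 x)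
  have hterm : ∀ n : ℕ, besselJnCoeff ν (n + 1) * x ^ (2 * (n + 1)) -
      besselJnCoeff (ν + 1) (n + 1) * x ^ (2 * (n + 1)) =
      -(x ^ 2 / (4 * (ν + 1) * (ν + 2))) * (besselJnCoeff (ν + 2) n * x ^ (2 * n)) := fun n => by
    have hn := n.cast_nonneg (α := ℝ)
    have hνn : ν + n + 1 ≠ 0 := by intro h; linarith
    have hνn' : ν + n + 2 ≠ 0 := by intro h; linarith
    have hν1' : ν + 1 ≠ 0 := by linarith
    have hν2' : ν + 2 ≠ 0 := by linarith
    have hshift2 := besselJnCoeff_add_one hν1 n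
    rw [show ν + 1 + 1 = ν + 2 by ring, show ν + 1 + n + 1 = ν + n + 2 by ring] at hshift2
    rw [besselJnCoeff_add_one hν, besselJnCoeff_succ hν, hshift2, besselJnCoeff_add_one hν,
      show 2 * (n + 1) = 2 * n + 2 by ring, pow_add]
    push_cast
    rw [show ν + (n + 1) + 1 = ν + n + 2 by ring]
    field_simp
    ring
  rw [besselJn_eq_tsum, besselJn_eq_tsum, ← (summable_besselJnCoeff_mul_pow hν x).tsum_sub
    (summable_besselJnCoeff_mul_pow hν1 x), hsum.tsum_eq_zero_add, tsum_congr hterm,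
    tsum_mul_left, besselJn_eq_tsum, besselJnCoeff_zero hν, besselJnCoeff_zero hν1]
  simp

lemma mul_deriv_besselJn_add_one (hν : -1 < ν) (x : ℝ) :
    x * deriv (besselJn (ν + 1)) x = 2 * (ν + 1) * (besselJn ν x - besselJn (ν + 1) x) := by
  have hderiv := hasDerivAt_besselJn (ν := ν + 1) (by linarith) x
  rw [show ν + 1 + 1 = ν + 2 by ring] at hderiv
  have hν1 : ν + 1 ≠ 0 := by linarith
  have hν2 : ν + 2 ≠ 0 := by linarith
  rw [hderiv.deriv, besselJn_sub_besselJn_add_one hν]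
  field_simp
  ring

lemma besselJn_add_one_pos (hν : -1 < ν) {b : ℝ} (h : ∀ t ∈ Ioo 0 b, 0 < besselJn ν t) :
    ∀ t ∈ Ioo 0 b, 0 < besselJn (ν + 1) t := by
  have hν1 : -1 < ν + 1 := by linarith
  refine pos_of_deriv_pos_of_eq_zero (continuous_besselJn hν1).continuousOn
    (by rw [besselJn_zero hν1]; exact one_pos) fun t ht hzero => ?_
  have hmul := mul_deriv_besselJn_add_one hν t
  rw [hzero, sub_zero] at hmul
  exact pos_of_mul_pos_right (hmul ▸ mul_pos (by linarith) (h t ht)) ht.1.le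

lemma besselJn_add_nat_pos (hν : -1 < ν) {b : ℝ} (h : ∀ t ∈ Ioo 0 b, 0 < besselJn ν t)
    (k : ℕ) : ∀ t ∈ Ioo 0 b, 0 < besselJn (ν + k) t := by
  induction k with
  | zero => simpa using h
  | succ k ih =>
    have := besselJn_add_one_pos (by linarith [k.cast_nonneg (α := ℝ)]) ih
    simpa [add_assoc] using this

lemma besselJn_pos_of_ne_zero (hν : -1 < ν) {b : ℝ} (h : ∀ t ∈ Ioo 0 b, besselJn ν t ≠ 0) :
    ∀ t ∈ Ioo 0 b, 0 < besselJn ν t :=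
  pos_of_deriv_pos_of_eq_zero (continuous_besselJn hν).continuousOn
    (by rw [besselJn_zero hν]; exact one_pos) fun t ht hzero => absurd hzero (h t ht)

lemma besselJn_lt_one (hν : -1 < ν) {x : ℝ} (hx : 0 < x)
    (h : ∀ t ∈ Ioo 0 x, 0 < besselJn (ν + 1) t) : besselJn ν x < 1 := by
  have hanti : StrictAntiOn (besselJn ν) (Icc 0 x) :=
    strictAntiOn_of_deriv_neg (convex_Icc 0 x) (continuous_besselJn hν).continuousOn
      fun t ht => by
        rw [interior_Icc] at ht
        rw [(hasDerivAt_besselJn hν t).deriv, neg_mul, neg_lt_zero]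
        exact mul_pos (div_pos ht.1 (by linarith)) (h t ht)
  simpa [besselJn_zero hν] using hanti (left_mem_Icc.2 hx.le) (right_mem_Icc.2 hx.le) hx

lemma add_two_mul_besselJn_add_one_lt (hν : -1 < ν) {x : ℝ} (hx : 0 < x)
    (h : ∀ t ∈ Ioo 0 x, 0 < besselJn (ν + 3) t) :
    (ν + 2) * besselJn (ν + 1) x < (ν + 1) * besselJn ν x + 1 := by
  have hν1 : -1 < ν + 1 := by linarith
  set F : ℝ → ℝ := fun t => (ν + 1) * besselJn ν t - (ν + 2) * besselJn (ν + 1) t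
  have hF : ∀ t,
      HasDerivAt F (t / 2 * (t ^ 2 / (4 * (ν + 2) * (ν + 3)) * besselJn (ν + 3) t)) t := by
    intro t
    have hrec := besselJn_sub_besselJn_add_one hν1 t
    have hd := ((hasDerivAt_besselJn hν t).const_mul (ν + 1)).sub
      ((hasDerivAt_besselJn hν1 t).const_mul (ν + 2))
    rw [show ν + 1 + 1 = ν + 2 by ring] at hrec hd
    rw [show ν + 1 + 2 = ν + 3 by ring] at hrec
    refine hd.congr_deriv ?_
    have hν1' : ν + 1 ≠ 0 := by linarith
    have hν2' : ν + 2 ≠ 0 := by linarith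
    have hcancel : ∀ c ≠ 0, ∀ J : ℝ, c * (-(t / (2 * c)) * J) = -(t / 2) * J :=
      fun c hc J => by field_simp
    rw [hcancel _ hν1', hcancel _ hν2']
    linear_combination (-(t / 2)) * hrec
  have hmono : StrictMonoOn F (Icc 0 x) :=
    strictMonoOn_of_deriv_pos (convex_Icc 0 x)
      (continuous_iff_continuousAt.2 fun t => (hF t).continuousAt).continuousOn fun t ht => by
        rw [interior_Icc] at ht
        rw [(hF t).deriv]
        exact mul_pos (half_pos ht.1) (mul_pos (div_pos (pow_pos ht.1 2) (by nlinarith)) (h t ht))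
  have := hmono (left_mem_Icc.2 hx.le) (right_mem_Icc.2 hx.le) hx
  simp only [F, besselJn_zero hν, besselJn_zero hν1] at this
  linarith

end Bessel

theorem besselJ_huygens_lower (ν p j : ℝ) (hν : -1 < ν)
    (hjfirst : ∀ y : ℝ, 0 < y → y < j → besselJn ν y ≠ 0)
    (hp : p ≤ (ν + 1) / (ν + 2)) :
    ∀ x : ℝ, 0 < x → x < j →
      (1 - p) / besselJn (ν + 1) x + p * besselJn ν x / besselJn (ν + 1) x > 1 := by
  intro x hx hxj
  have hpos := besselJn_add_nat_pos hν
    (besselJn_pos_of_ne_zero hν fun t ht => hjfirst t ht.1 ht.2)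
  have hpos_x (k : ℕ) : ∀ t ∈ Ioo 0 x, 0 < besselJn (ν + k) t :=
    fun t ht => hpos k t ⟨ht.1, ht.2.trans hxj⟩
  have hlt_one := besselJn_lt_one hν hx (by simpa using hpos_x 1)
  have hmain := add_two_mul_besselJn_add_one_lt hν hx (by simpa using hpos_x 3)
  have hden : 0 < besselJn (ν + 1) x := by simpa using hpos 1 x ⟨hx, hxj⟩
  have hp' : p * (ν + 2) ≤ ν + 1 := (le_div_iff₀ (by linarith)).1 hp
  rw [← add_div, gt_iff_lt, one_lt_div hden]
  nlinarith [mul_le_mul_of_nonneg_right hp' (by linarith : 0 ≤ 1 - besselJn ν x)]
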